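/- Liveness of FastSet: for all claim sequences γ, γ' that are compatible (γ △ γ') with γ' not an interleaving cut of γ (¬(γ' ⊑ γ)), and for every state s with γ↓s and γ'↓s, there exist an address a and a claim c with address a occurring in γ' but not accounted for in γ (formally, (γ c)|a is a prefix of γ'|a) such that (γ c) △ γ' and (γ c)↓s. -/
import Mathlib


/-- Semantics of a sequence of claims: process claims left to right,
undefined (`none`) as soon as one claim is undefined. -/
def run {State Claim : Type*} (sem : Claim → State → Option State) :
    List Claim → State → Option State
  | [], s => some s
  | c :: γ, s => (sem c s).bind (run sem γ)

/-- A claim sequence is valid (defined) in a state. -/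
def Defined {State Claim : Type*} (sem : Claim → State → Option State)
    (γ : List Claim) (s : State) : Prop :=
  run sem γ s ≠ none

/-- Weak equivalence of claim sequences: whenever both are valid in a state,
they yield the same result. -/
def WeakEquiv {State Claim : Type*} (sem : Claim → State → Option State)
    (γ γ' : List Claim) : Prop :=
  ∀ s : State, Defined sem γ s → Defined sem γ' s → run sem γ s = run sem γ' s

/-- Weak independence of claims: whenever both are valid in a state, both
processing orders are valid and yield the same result. -/
def WeakIndep {State Claim : Type*} (sem : Claim → State → Option State)
    (c c' : Claim) : Prop :=
  ∀ s : State, sem c s ≠ none → sem c' s ≠ none →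
    Defined sem [c, c'] s ∧ Defined sem [c', c] s ∧
      run sem [c, c'] s = run sem [c', c] s

/-- The reduct (filtering) of a claim sequence by an address: the sublist of
claims issued by that address, in order. -/
def reduct {Claim Address : Type*} [DecidableEq Address] (addr : Claim → Address)
    (γ : List Claim) (a : Address) : List Claim :=
  γ.filter (fun c => decide (addr c = a))

/-- Interleaving equivalence: the reducts by every address coincide. -/
def InterEquiv {Claim Address : Type*} [DecidableEq Address] (addr : Claim → Address)
    (γ γ' : List Claim) : Prop :=
  ∀ a : Address, reduct addr γ a = reduct addr γ' a

/-- `γ` is an interleaving cut of `γ'`: each reduct of `γ` is a prefix of the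
corresponding reduct of `γ'`. -/
def InterCut {Claim Address : Type*} [DecidableEq Address] (addr : Claim → Address)
    (γ γ' : List Claim) : Prop :=
  ∀ a : Address, reduct addr γ a <+: reduct addr γ' a

/-- `γ` is an interleaving `a`-maximal cut of `γ'`. -/
def InterMaxCut {Claim Address : Type*} [DecidableEq Address] (addr : Claim → Address)
    (a : Address) (γ γ' : List Claim) : Prop :=
  InterCut addr γ γ' ∧ reduct addr γ a = reduct addr γ' a

/-- Compatibility of claim sequences: for every address, one reduct is a
prefix of the other. -/
def Compatible {Claim Address : Type*} [DecidableEq Address] (addr : Claim → Address)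
    (γ γ' : List Claim) : Prop :=
  ∀ a : Address, reduct addr γ a <+: reduct addr γ' a ∨ reduct addr γ' a <+: reduct addr γ a

section Aux

variable {State Claim Address : Type*} [DecidableEq Address]
  {sem : Claim → State → Option State} {addr : Claim → Address}

lemma run_append' (xs ys : List Claim) (s : State) :
    run sem (xs ++ ys) s = (run sem xs s).bind (run sem ys) := by
  induction xs generalizing s with
  | nil => simp [run]
  | cons c xs ih =>
      simp only [List.cons_append, run, Option.bind_assoc]
      cases sem c s <;> simp [ih]

lemma defined_prefix' {xs ys : List Claim} {s : State} (h : xs <+: ys)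
    (hys : run sem ys s ≠ none) : run sem xs s ≠ none := by
  obtain ⟨t, rfl⟩ := h
  intro hx
  apply hys
  rw [run_append', hx]; rfl

omit [DecidableEq Address] in
lemma swap_lemma' (hindep : ∀ c c' : Claim, addr c ≠ addr c' → WeakIndep sem c c')
    {c : Claim} :
    ∀ (μ : List Claim), (∀ d ∈ μ, addr d ≠ addr c) →
    ∀ u : State, sem c u ≠ none → run sem μ u ≠ none →
      run sem (μ ++ [c]) u = run sem (c :: μ) u ∧ run sem (c :: μ) u ≠ none := by
  intro μ
  induction μ with
  | nil => intro _ u hc _; exact ⟨rfl, by simpa [run] using hc⟩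
  | cons d μ ih =>
      intro hμ u hc hrun
      have hd : sem d u ≠ none := by
        intro h; apply hrun; simp [run, h]
      obtain ⟨h1, h2, h3⟩ := hindep d c (hμ d (by simp)) u hd hc
      obtain ⟨u', hu'⟩ := Option.ne_none_iff_exists'.mp hd
      have hcu' : sem c u' ≠ none := by
        intro h; apply h1; show run sem [d, c] u = none; simp [run, hu', h]
      have hμu' : run sem μ u' ≠ none := by
        intro h; apply hrun; simp [run, hu', h]
      obtain ⟨ihEq, ihNe⟩ := ih (fun x hx => hμ x (by simp [hx])) u' hcu' hμu'
      have key : run sem (c :: d :: μ) u = run sem (c :: μ) u' := by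
        have e1 : run sem (c :: d :: μ) u = (run sem [c, d] u).bind (run sem μ) := by
          simpa using run_append' (sem := sem) [c, d] μ u
        have e2 : run sem [d, c] u = sem c u' := by
          simp [run, hu']
        have e3 : run sem (c :: μ) u' = (sem c u').bind (run sem μ) := by
          simp [run]
        rw [e1, ← h3, e2, e3]
      refine ⟨?_, key ▸ ihNe⟩
      have e4 : run sem ((d :: μ) ++ [c]) u = run sem (μ ++ [c]) u' := by
        simp [run, hu']
      rw [e4, ihEq, key]

lemma reorder_lemma' (hindep : ∀ c c' : Claim, addr c ≠ addr c' → WeakIndep sem c c') :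
    ∀ (α γ : List Claim) (s : State),
      (∀ b, reduct addr α b <+: reduct addr γ b) →
      run sem γ s ≠ none → run sem α s ≠ none →
      ∃ ρ, run sem (α ++ ρ) s = run sem γ s ∧
        ∀ b, reduct addr α b ++ reduct addr ρ b = reduct addr γ b := by
  intro α
  induction α with
  | nil => intro γ s _ _ _; exact ⟨γ, rfl, fun b => by simp [reduct]⟩
  | cons c₀ α₀ ih =>
      intro γ s hcut hγ hα
      have h0 : reduct addr (c₀ :: α₀) (addr c₀) = c₀ :: reduct addr α₀ (addr c₀) := by
        simp [reduct]
      obtain ⟨w, hw⟩ : ∃ w, reduct addr γ (addr c₀) = c₀ :: w := by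
        obtain ⟨t, ht⟩ := hcut (addr c₀)
        rw [h0] at ht
        exact ⟨reduct addr α₀ (addr c₀) ++ t, by rw [← ht]; simp⟩
      obtain ⟨μ, ν, rfl, hμ, hc₀, hν⟩ := List.filter_eq_cons_iff.mp hw
      have hμa : ∀ d ∈ μ, addr d ≠ addr c₀ := by
        intro d hd h
        exact (hμ d hd) (by simp [h])
      have hc₀s : sem c₀ s ≠ none := by
        intro h; apply hα; simp [run, h]
      have hμs : run sem μ s ≠ none := by
        intro h; apply hγ; rw [run_append']; simp [h]
      obtain ⟨swEq, swNe⟩ := swap_lemma' hindep μ hμa s hc₀s hμs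
      have key : run sem (μ ++ c₀ :: ν) s = run sem (c₀ :: (μ ++ ν)) s := by
        have e1 : run sem (μ ++ c₀ :: ν) s = (run sem (μ ++ [c₀]) s).bind (run sem ν) := by
          rw [run_append', run_append']
          cases run sem μ s <;> simp [run]
        have e2 : run sem (c₀ :: (μ ++ ν)) s = (run sem (c₀ :: μ) s).bind (run sem ν) := by
          simpa using run_append' (sem := sem) (c₀ :: μ) ν s
        rw [e1, swEq, e2]
      obtain ⟨s', hs'⟩ := Option.ne_none_iff_exists'.mp hc₀s
      have hstep : run sem (μ ++ c₀ :: ν) s = run sem (μ ++ ν) s' := by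
        rw [key]; simp [run, hs']
      have hcut' : ∀ b, reduct addr α₀ b <+: reduct addr (μ ++ ν) b := by
        intro b
        by_cases hb : b = addr c₀
        · subst hb
          have : reduct addr (μ ++ ν) (addr c₀) = w := by
            simp [reduct, List.filter_append, List.filter_eq_nil_iff.mpr hμ, hν]
          rw [this]
          have := hcut (addr c₀)
          rw [h0, hw] at this
          exact (List.cons_prefix_cons.mp this).2
        · have e : reduct addr (μ ++ ν) b = reduct addr (μ ++ c₀ :: ν) b := by
            simp [reduct, List.filter_append, List.filter_cons,
              show ¬ addr c₀ = b from fun h => hb h.symm]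
          rw [e]
          have := hcut b
          have e2 : reduct addr (c₀ :: α₀) b = reduct addr α₀ b := by
            simp [reduct, List.filter_cons, show ¬ addr c₀ = b from fun h => hb h.symm]
          rwa [e2] at this
      have hγ' : run sem (μ ++ ν) s' ≠ none := by rw [← hstep]; exact hγ
      have hα' : run sem α₀ s' ≠ none := by
        intro h; apply hα; simp [run, hs', h]
      obtain ⟨ρ, hρEq, hρred⟩ := ih (μ ++ ν) s' hcut' hγ' hα'
      refine ⟨ρ, ?_, ?_⟩
      · have : run sem ((c₀ :: α₀) ++ ρ) s = run sem (α₀ ++ ρ) s' := by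
          simp [run, hs']
        rw [this, hρEq, ← hstep]
      · intro b
        by_cases hb : b = addr c₀
        · subst hb
          have e1 : reduct addr (μ ++ ν) (addr c₀) = w := by
            simp [reduct, List.filter_append, List.filter_eq_nil_iff.mpr hμ, hν]
          have := hρred (addr c₀)
          rw [e1] at this
          rw [h0, hw, List.cons_append]
          rw [← this]
        · have e : reduct addr (μ ++ ν) b = reduct addr (μ ++ c₀ :: ν) b := by
            simp [reduct, List.filter_append, List.filter_cons,
              show ¬ addr c₀ = b from fun h => hb h.symm]
          have e2 : reduct addr (c₀ :: α₀) b = reduct addr α₀ b := by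
            simp [reduct, List.filter_cons, show ¬ addr c₀ = b from fun h => hb h.symm]
          rw [e2, hρred b, e]

lemma min_fail' {γ γ' : List Claim} :
    ∀ k : ℕ, ¬ InterCut addr (γ'.take k) γ →
      ∃ m, m < k ∧ InterCut addr (γ'.take m) γ ∧ ¬ InterCut addr (γ'.take (m+1)) γ := by
  intro k
  induction k with
  | zero =>
      intro h
      exact absurd (fun a => by simp [reduct]) h
  | succ k ih =>
      intro h
      by_cases hk : InterCut addr (γ'.take k) γ
      · exact ⟨k, Nat.lt_succ_self k, hk, h⟩
      · obtain ⟨m, hm, h1, h2⟩ := ih hk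
        exact ⟨m, hm.trans (Nat.lt_succ_self k), h1, h2⟩

end Aux

theorem fastset_liveness {State Claim Address : Type*} [DecidableEq Address]
    (sem : Claim → State → Option State) (addr : Claim → Address)
    (hindep : ∀ c c' : Claim, addr c ≠ addr c' → WeakIndep sem c c')
    (γ γ' : List Claim) (hcompat : Compatible addr γ γ') (hnotcut : ¬ InterCut addr γ' γ)
    (s : State) (hγ : Defined sem γ s) (hγ' : Defined sem γ' s) :
    ∃ (a : Address) (c : Claim), addr c = a ∧
      reduct addr (γ ++ [c]) a <+: reduct addr γ' a ∧
      Compatible addr (γ ++ [c]) γ' ∧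
      Defined sem (γ ++ [c]) s := by
  -- find the minimal failing prefix of γ'
  have htake : ¬ InterCut addr (γ'.take γ'.length) γ := by simpa using hnotcut
  obtain ⟨m, hmlt, hcutm, hnotm⟩ := min_fail' γ'.length htake
  have hmlen : m < γ'.length := hmlt
  set α := γ'.take m with hα
  set c := γ'[m] with hc
  set a := addr c with ha
  have htake1 : γ'.take (m+1) = α ++ [c] := by
    rw [List.take_succ, List.getElem?_eq_getElem hmlen]; rfl
  rw [htake1] at hnotm
  -- the failing address must be a
  have hnotpc : ¬ reduct addr (α ++ [c]) a <+: reduct addr γ a := by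
    intro h
    apply hnotm
    intro b
    by_cases hb : b = a
    · subst hb; exact h
    · have e : reduct addr (α ++ [c]) b = reduct addr α b := by
        simp [reduct, List.filter_append, List.filter_cons,
          show ¬ addr c = b from fun h' => hb (h' ▸ ha.symm ▸ rfl)]
      rw [e]; exact hcutm b
  -- α ++ [c] is a prefix of γ'
  have hpfx : α ++ [c] <+: γ' := htake1 ▸ List.take_prefix (m+1) γ'
  have hαpfx : α <+: γ' := List.take_prefix m γ'
  have hredpfx : reduct addr (α ++ [c]) a <+: reduct addr γ' a := hpfx.filter _
  -- γ|a is a prefix of γ'|a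
  have hγγ' : reduct addr γ a <+: reduct addr γ' a := by
    rcases hcompat a with h | h
    · exact h
    · exact (hnotpc (hredpfx.trans h)).elim
  -- γ|a = α|a
  have hαγa : reduct addr α a <+: reduct addr γ a := hcutm a
  have heq : reduct addr γ a = reduct addr α a := by
    by_contra hne
    have hlt : (reduct addr α a).length < (reduct addr γ a).length := by
      rcases lt_or_ge (reduct addr α a).length (reduct addr γ a).length with h | h
      · exact h
      · exact absurd (hαγa.eq_of_length_le h).symm hne
    have hlen : (reduct addr (α ++ [c]) a).length ≤ (reduct addr γ a).length := by
      have : reduct addr (α ++ [c]) a = reduct addr α a ++ [c] := by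
        simp [reduct, List.filter_append, List.filter_cons, ha.symm]
      rw [this]; simpa using hlt
    exact hnotpc (List.prefix_of_prefix_length_le hredpfx hγγ' hlen)
  have hredca : reduct addr (γ ++ [c]) a = reduct addr γ a ++ [c] := by
    simp [reduct, List.filter_append, List.filter_cons, ha.symm]
  have hgoal1 : reduct addr (γ ++ [c]) a <+: reduct addr γ' a := by
    rw [hredca, heq]
    have : reduct addr (α ++ [c]) a = reduct addr α a ++ [c] := by
      simp [reduct, List.filter_append, List.filter_cons, ha.symm]
    rw [← this]; exact hredpfx
  refine ⟨a, c, ha.symm, hgoal1, ?_, ?_⟩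
  · -- compatibility of γ ++ [c] with γ'
    intro b
    by_cases hb : b = a
    · subst hb; exact Or.inl hgoal1
    · have e : reduct addr (γ ++ [c]) b = reduct addr γ b := by
        simp [reduct, List.filter_append, List.filter_cons,
          show ¬ addr c = b from fun h' => hb (h' ▸ ha.symm ▸ rfl)]
      rw [e]; exact hcompat b
  · -- definedness
    have hαs : run sem α s ≠ none := defined_prefix' hαpfx hγ'
    obtain ⟨ρ, hρEq, hρred⟩ := reorder_lemma' hindep α γ s hcutm hγ hαs
    have hρa : reduct addr ρ a = [] := by
      have := hρred a
      rw [heq] at this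
      exact List.append_right_eq_self.mp this
    have hρmem : ∀ d ∈ ρ, addr d ≠ a := by
      intro d hd h
      have := List.filter_eq_nil_iff.mp hρa d hd
      simp [h] at this
    obtain ⟨t, ht⟩ : ∃ t, run sem α s = some t := Option.ne_none_iff_exists'.mp hαs
    have hρt : run sem ρ t ≠ none := by
      intro h
      apply hγ
      rw [← hρEq, run_append', ht]
      simpa using h
    have hct : sem c t ≠ none := by
      have h1 : run sem (α ++ [c]) s ≠ none := defined_prefix' hpfx hγ'
      intro h
      apply h1
      rw [run_append', ht]
      simp [run, h]
    obtain ⟨swEq, swNe⟩ := swap_lemma' hindep ρ (fun d hd => ha ▸ hρmem d hd) t hct hρt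
    show run sem (γ ++ [c]) s ≠ none
    rw [run_append']
    rw [← hρEq, run_append', ht]
    intro h
    apply swEq ▸ swNe
    rw [run_append']
    simpa using h
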